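/- arXiv:1708.03673 — 2 statements merged into one kernel-verified Lean document; each statement's English description precedes it below -/
import Mathlib

section
/- Let k ≥ 1, let w ∈ G_{k+1} be a good involution, let x = t s_1 s_2 ⋯ s_k ∈ B_{k+1}, and for 1 ≤ i ≤ k let x_i = t s_1 ⋯ ŝ_i ⋯ s_k (the product with s_i omitted). Then: (i) x⁻¹wx ∈ B_k if and only if w(1) = 1; (ii) x⁻¹wtx ∈ B_k if and only if w(1) = −1; (iii) for 1 ≤ i ≤ k, x⁻¹w x_i ∈ B_k if and only if w(1) = −(i+1). Moreover, in each of these cases the resulting element of B_k is a good involution. -/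
namespace PaperB

open scoped Classical

def B (n : ℕ) : Subgroup (Equiv.Perm ℤ) where
  carrier := {w | (∀ i : ℤ, w (-i) = - w i) ∧ ∀ i : ℤ, (n : ℤ) < |i| → w i = i}
  one_mem' := ⟨fun _ => rfl, fun _ _ => rfl⟩
  mul_mem' := by
    rintro a b ⟨ha1, ha2⟩ ⟨hb1, hb2⟩
    refine ⟨fun i => ?_, fun i hi => ?_⟩
    · rw [Equiv.Perm.mul_apply, Equiv.Perm.mul_apply, hb1, ha1]
    · rw [Equiv.Perm.mul_apply, hb2 i hi, ha2 i hi]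
  inv_mem' := by
    rintro a ⟨ha1, ha2⟩
    refine ⟨fun i => a.injective ?_, fun i hi => a.injective ?_⟩
    · rw [Equiv.Perm.coe_inv, Equiv.apply_symm_apply, ha1, Equiv.apply_symm_apply]
    · rw [Equiv.Perm.coe_inv, Equiv.apply_symm_apply, ha2 i hi]

def t : Equiv.Perm ℤ := Equiv.swap (-1) 1

def s (i : ℕ) : Equiv.Perm ℤ :=
  Equiv.swap (i : ℤ) ((i : ℤ) + 1) * Equiv.swap (-(i : ℤ)) (-((i : ℤ) + 1))

def gens (n : ℕ) : Set (Equiv.Perm ℤ) := insert t (s '' Set.Ico 1 n)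

noncomputable def len (n : ℕ) (w : Equiv.Perm ℤ) : ℕ :=
  sInf {l | ∃ L : List (Equiv.Perm ℤ), (∀ g ∈ L, g ∈ gens n) ∧ L.prod = w ∧ L.length = l}

/-- A model of the Iwahori–Hecke algebra `H_{p,q}(Bₘ)`:  a `ℂ`-algebra `H` together with a
family `T w`, `w ∈ Bₘ`, which is linearly independent, satisfies `T 1 = 1`, and satisfies the
standard multiplication rule
`T w * T g = T (w g)` if `ℓ(w g) > ℓ(w)` and
`T w * T g = par(g) T (w g) + (1 - par(g)) T w` otherwise,
where `par t = p` and `par sᵢ = q`. -/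
structure HeckeModel (m : ℕ) (p q : ℂ) (H : Type) [Ring H] [Algebra ℂ H] where
  T : Equiv.Perm ℤ → H
  T_one : T 1 = 1
  T_mul : ∀ w ∈ B m, ∀ g ∈ gens m,
    T w * T g =
      if len m w < len m (w * g) then T (w * g)
      else (if g = t then p else q) • T (w * g) + (1 - if g = t then p else q) • T w
  free : LinearIndependent ℂ (fun w : {x // x ∈ B m} => T w.1)

/-- The element `-w`, given by `(-w)(i) = -(w i)`. -/
def negOf (w : Equiv.Perm ℤ) : Equiv.Perm ℤ := (Equiv.neg ℤ : Equiv.Perm ℤ) * w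

/-- A good involution in `B_k`. -/
def Good (k : ℕ) (w : Equiv.Perm ℤ) : Prop :=
  w ∈ B k ∧ w * w = 1 ∧ ∀ i : ℤ, 1 ≤ i → i ≤ (k : ℤ) → (w i = i ∨ w i < 0)

/-- `a(w)`: the number of `1 ≤ j ≤ m` with `w j = j`. -/
noncomputable def aFix (m : ℕ) (w : Equiv.Perm ℤ) : ℕ :=
  ((Finset.Icc (1 : ℤ) (m : ℤ)).filter fun j => w j = j).card

/-- `d(i, w)`: the number of `i < j ≤ m` with `w j = j`. -/
noncomputable def dFix (m : ℕ) (i : ℤ) (w : Equiv.Perm ℤ) : ℕ :=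
  ((Finset.Ioc i (m : ℤ)).filter fun j => w j = j).card

/-- `c(w)`: the number of `w`-tidy pairs `{i, j}`, i.e. pairs of distinct indices
`1 ≤ i, j ≤ m` with `-w i < j` and `-w j < i`. -/
noncomputable def cTidy (m : ℕ) (w : Equiv.Perm ℤ) : ℕ :=
  (((Finset.Icc (1 : ℤ) (m : ℤ)) ×ˢ (Finset.Icc (1 : ℤ) (m : ℤ))).filter
    fun pr => pr.1 < pr.2 ∧ -w pr.1 < pr.2 ∧ -w pr.2 < pr.1).card

/-- `x = t s₁ s₂ ⋯ s_k ∈ B_{k+1}`. -/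
def xE (k : ℕ) : Equiv.Perm ℤ := (t :: ((List.range k).map fun j => s (j + 1))).prod

/-- `xᵢ = t s₁ ⋯ ŝᵢ ⋯ s_k ∈ B_{k+1}` (the product with `sᵢ` omitted). -/
def xI (k i : ℕ) : Equiv.Perm ℤ :=
  (t :: ((((List.range k).map fun j => j + 1).filter fun j => j ≠ i).map s)).prod


/-- The parabolic subgroup `S_k ⊆ B_k` generated by `s₁, …, s_{k-1}`. -/
def Spar (k : ℕ) : Subgroup (Equiv.Perm ℤ) := Subgroup.closure (s '' Set.Ico 1 k)

/-- `c(-w)` for `w ∈ S_k`: the number of neat pairs of `w`, i.e. pairs `{i,j}` of distinct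
indices `1 ≤ i, j ≤ k` with `w i < j` and `w j < i`. -/
noncomputable def cNeat (k : ℕ) (w : Equiv.Perm ℤ) : ℕ :=
  (((Finset.Icc (1 : ℤ) (k : ℤ)) ×ˢ (Finset.Icc (1 : ℤ) (k : ℤ))).filter
    fun pr => pr.1 < pr.2 ∧ w pr.1 < pr.2 ∧ w pr.2 < pr.1).card

/-- The set `X_{0,k}` of distinguished (minimal length) right coset representatives of
`S_k` in `B_k`. -/
def X0 (k : ℕ) : Set (Equiv.Perm ℤ) :=
  {x | x ∈ B k ∧ ∀ u ∈ Spar k, len k x ≤ len k (u * x)}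

/-- `Succ(w)` for a good involution `w ∈ G_k`. -/
def Succ (k : ℕ) (w : Equiv.Perm ℤ) : Set (Equiv.Perm ℤ) :=
  {xE k * w * (xE k)⁻¹, xE k * w * (xE k)⁻¹ * t} ∪
    {y | ∃ i : ℕ, 1 ≤ i ∧ i ≤ k ∧ w (i : ℤ) = (i : ℤ) ∧ y = xE k * w * (xI k i)⁻¹}

/-- The element `c = s_{n+1} s_{n+2} ⋯ s_{n+k} ∈ B_{n+k+1}`. -/
def cElt (n k : ℕ) : Equiv.Perm ℤ := ((List.range k).map fun j => s (n + 1 + j)).prod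

/-- The palindromic product `s_{n+k} s_{n+k-1} ⋯ s_{n+i} ⋯ s_{n+k-1} s_{n+k}`. -/
def pal (n k i : ℕ) : Equiv.Perm ℤ :=
  (((List.range (k - i)).map fun j => s (n + k - j)) ++ [s (n + i)] ++
    ((List.range (k - i)).map fun j => s (n + i + 1 + j))).prod

/-- The parabolic subgroup `B_n × S_k` of `B_{n+k}`, generated by
`{t, s₁, …, s_{n-1}} ∪ {s_{n+1}, …, s_{n+k-1}}` (with `t` omitted when `n = 0`). -/
def P (n k : ℕ) : Subgroup (Equiv.Perm ℤ) :=
  Subgroup.closure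
    ((if n = 0 then (∅ : Set (Equiv.Perm ℤ)) else {t}) ∪ s '' Set.Ico 1 n ∪
      s '' Set.Ico (n + 1) (n + k))

/-- The factor `S_k` of `B_n × S_k`, generated by `s_{n+1}, …, s_{n+k-1}`. -/
def SparF (n k : ℕ) : Subgroup (Equiv.Perm ℤ) := Subgroup.closure (s '' Set.Ico (n + 1) (n + k))

/-- The set `X_{n,k}` of distinguished (minimal length) right coset representatives of
`B_n × S_k` in `B_{n+k}`. -/
def Xnk (n k : ℕ) : Set (Equiv.Perm ℤ) :=
  {x | x ∈ B (n + k) ∧ ∀ u ∈ P n k, len (n + k) x ≤ len (n + k) (u * x)}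

/-- The strict Bruhat order on `B_m`: `x < w` iff `x ≠ w` and some reduced expression of `w`
has a subword whose product is `x`. -/
def bruhatLT (m : ℕ) (x w : Equiv.Perm ℤ) : Prop :=
  x ≠ w ∧ ∃ L : List (Equiv.Perm ℤ), (∀ g ∈ L, g ∈ gens m) ∧ L.prod = w ∧ L.length = len m w ∧
    ∃ L' : List (Equiv.Perm ℤ), L'.Sublist L ∧ L'.prod = x

/-! With `x = xE k`, an element `y ∈ B_{k+1}` lies in `B_k` iff it fixes `k + 1`, and for each of
the three elements this reduces to the value of `w` at `x (k + 1) = -1`, respectively at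
`xᵢ (k + 1) = i + 1`. For goodness, the key facts are that `x` shifts `1, …, k` to `2, …, k + 1`
and that `xᵢ = x · ρ` with `ρ` the signed transposition of `i` and `k + 1`. In case (ii), `w`
commutes with `t`; in case (iii), `z = x⁻¹ w x` swaps `i` and `k + 1`, so it commutes with `ρ`.
Either way the element is again an involution, and on `1, …, k` it agrees with `z` (or fixes `i`).
Finally `z` sends each `j ≤ k` to `j`, to a negative number, or to `k + 1`, and the last option
is excluded once `k + 1` is fixed. -/

open Equiv

lemma B_mono {m n : ℕ} (h : m ≤ n) : B m ≤ B n := fun _ ⟨hodd, hfix⟩ =>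
  ⟨hodd, fun i hi => hfix i (lt_of_le_of_lt (by exact_mod_cast h) hi)⟩

lemma mem_B_iff_apply_succ {k : ℕ} {z : Perm ℤ} (hz : z ∈ B (k + 1)) :
    z ∈ B k ↔ z (k + 1) = k + 1 := by
  obtain ⟨hodd, hfix⟩ := hz
  refine ⟨fun h => h.2 _ (by rw [abs_of_pos (by positivity)]; omega),
    fun h => ⟨hodd, fun i hi => ?_⟩⟩
  rcases lt_abs.mp hi with hi | hi
  · obtain rfl | hi := eq_or_lt_of_le (show (k : ℤ) + 1 ≤ i by omega)
    · exact h
    · exact hfix i (by push_cast; rw [lt_abs]; omega)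
  · obtain hi' | hi' := eq_or_lt_of_le (show (k : ℤ) + 1 ≤ -i by omega)
    · rw [show i = -(k + 1) by omega, hodd, h]
    · exact hfix i (by push_cast; rw [lt_abs]; omega)

lemma abs_apply_le_of_mem_B {n : ℕ} {z : Perm ℤ} (hz : z ∈ B n) {i : ℤ} (hi : |i| ≤ n) :
    |z i| ≤ n := by
  by_contra! h
  have : z (z i) = z i := hz.2 _ h
  rw [z.injective this] at h
  omega

lemma t_mem_B {n : ℕ} (hn : 1 ≤ n) : t ∈ B n := by
  refine ⟨fun i => ?_, fun i hi => ?_⟩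
  · simp only [t, swap_apply_def]; split_ifs <;> omega
  · rw [lt_abs] at hi; simp only [t, swap_apply_def]; split_ifs <;> omega

def signedSwap (a b : ℤ) : Perm ℤ := swap a b * swap (-a) (-b)

lemma s_eq_signedSwap (i : ℕ) : s i = signedSwap i (i + 1) := rfl

section signedSwap

variable {a b : ℤ}

lemma signedSwap_comm (a b : ℤ) : signedSwap a b = signedSwap b a := by
  rw [signedSwap, signedSwap, swap_comm a, swap_comm (-a)]

lemma signedSwap_apply_left (ha : 0 < a) (hb : 0 < b) : signedSwap a b a = b := by
  simp only [signedSwap, Perm.mul_apply, swap_apply_def]; split_ifs <;> omega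

lemma signedSwap_apply_right (ha : 0 < a) (hb : 0 < b) : signedSwap a b b = a := by
  rw [signedSwap_comm, signedSwap_apply_left hb ha]

lemma signedSwap_apply_of_ne {j : ℤ} (ha : j ≠ a) (hb : j ≠ b) (ha' : j ≠ -a) (hb' : j ≠ -b) :
    signedSwap a b j = j := by
  rw [signedSwap, Perm.mul_apply, swap_apply_of_ne_of_ne ha' hb', swap_apply_of_ne_of_ne ha hb]

lemma signedSwap_mem_B {n : ℕ} (ha : 0 < a) (hb : 0 < b) (han : a ≤ n) (hbn : b ≤ n) :
    signedSwap a b ∈ B n := by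
  refine ⟨fun i => ?_, fun i hi => ?_⟩
  · simp only [signedSwap, Perm.mul_apply, swap_apply_def]; split_ifs <;> omega
  · rw [lt_abs] at hi
    simp only [signedSwap, Perm.mul_apply, swap_apply_def]; split_ifs <;> omega

lemma signedSwap_mul_self (ha : 0 < a) (hb : 0 < b) : signedSwap a b * signedSwap a b = 1 := by
  ext j
  simp only [signedSwap, Perm.mul_apply, Perm.one_apply, swap_apply_def]
  split_ifs <;> omega

lemma mul_signedSwap_mul_inv {f : Perm ℤ} (hf : ∀ i, f (-i) = -f i) (a b : ℤ) :
    f * signedSwap a b * f⁻¹ = signedSwap (f a) (f b) := by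
  rw [signedSwap, signedSwap, ← hf, ← hf, swap_apply_apply, swap_apply_apply]
  group

end signedSwap

lemma s_mem_B {i : ℕ} (hi : 1 ≤ i) : s i ∈ B (i + 1) :=
  signedSwap_mem_B (by omega) (by omega) (by omega) (by push_cast; rfl)

lemma xE_succ (k : ℕ) : xE (k + 1) = xE k * s (k + 1) := by
  simp [xE, List.range_succ, mul_assoc]

lemma xE_mem_B (k : ℕ) : xE k ∈ B (k + 1) := by
  induction k with
  | zero => exact t_mem_B le_rfl
  | succ k ih =>
    rw [xE_succ]
    exact mul_mem (B_mono (by omega) ih) (s_mem_B (by omega))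

lemma s_succ_apply_of_le {k : ℕ} {j : ℤ} (h1 : 1 ≤ j) (hj : j ≤ k) : s (k + 1) j = j := by
  rw [s_eq_signedSwap]; push_cast
  exact signedSwap_apply_of_ne (by omega) (by omega) (by omega) (by omega)

lemma xE_apply_succ (k : ℕ) : xE k (k + 1) = -1 := by
  induction k with
  | zero => simp [xE, t]
  | succ k ih =>
    rw [xE_succ, Perm.mul_apply, s_eq_signedSwap]
    push_cast
    rw [signedSwap_apply_right (by omega) (by omega), ih]

lemma xE_apply_of_le {k : ℕ} {j : ℤ} (h1 : 1 ≤ j) (hj : j ≤ k) : xE k j = j + 1 := by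
  induction k with
  | zero => omega
  | succ k ih =>
    rw [xE_succ, Perm.mul_apply]
    obtain hj | rfl := lt_or_eq_of_le hj
    · rw [s_succ_apply_of_le h1 (by omega), ih (by omega)]
    · rw [s_eq_signedSwap, signedSwap_apply_left (by omega) (by omega)]
      exact (xE_mem_B k).2 _ (by push_cast; rw [lt_abs]; omega)

lemma xI_succ {k i : ℕ} (hik : i ≤ k) : xI (k + 1) i = xI k i * s (k + 1) := by
  simp [xI, List.range_succ, List.filter_append, show k + 1 ≠ i by omega, mul_assoc]

lemma xI_self (i : ℕ) : xI (i + 1) (i + 1) = xE i := by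
  simp only [xI, xE, List.range_succ, List.map_append, List.filter_append]
  rw [List.filter_eq_self.mpr (by simpa using fun a ha => ha.ne)]
  simp [Function.comp_def]

lemma xI_eq {k i : ℕ} (h1 : 1 ≤ i) (hik : i ≤ k) : xI k i = xE k * signedSwap i (k + 1) := by
  induction k, hik using Nat.le_induction with
  | base =>
    obtain ⟨i, rfl⟩ : ∃ m, i = m + 1 := ⟨i - 1, by omega⟩
    rw [xI_self, xE_succ, ← s_eq_signedSwap, mul_assoc, s_eq_signedSwap,
      signedSwap_mul_self (by omega) (by omega), mul_one]
  | succ k hik ih =>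
    have hconj :
        s (k + 1) * signedSwap i (k + 1 + 1) * (s (k + 1))⁻¹ = signedSwap i (k + 1) := by
      rw [mul_signedSwap_mul_inv (s_mem_B (by omega)).1, s_succ_apply_of_le (by omega) (by omega),
        s_eq_signedSwap]
      push_cast
      rw [signedSwap_apply_right (by omega) (by omega)]
    rw [xI_succ hik, ih, xE_succ, ← hconj]
    push_cast
    group

lemma inv_xE_apply_of_neg {k : ℕ} {v : ℤ} (h1 : -(k + 1) ≤ v) (h2 : v ≤ -2) :
    (xE k)⁻¹ v = v + 1 := by
  rw [Perm.inv_eq_iff_eq, show v + 1 = -(-(v + 1)) by ring, (xE_mem_B k).1,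
    xE_apply_of_le (by omega) (by omega)]
  ring

lemma mul_mul_self_eq_one_of_commute {G : Type*} [Group G] {a b : G} (hab : Commute a b)
    (ha : a * a = 1) (hb : b * b = 1) : a * b * (a * b) = 1 := by
  rw [← sq, hab.mul_pow, sq, sq, ha, hb, one_mul]

lemma mul_self_inv_mul_mul_eq_one {G : Type*} [Group G] {a : G} (ha : a * a = 1) (x : G) :
    x⁻¹ * a * x * (x⁻¹ * a * x) = 1 := by
  rw [show x⁻¹ * a * x * (x⁻¹ * a * x) = x⁻¹ * (a * a) * x by group, ha]
  group

lemma apply_eq_iff_of_mul_self_eq_one {α : Type*} {f : Perm α} (hf : f * f = 1) {a b : α} :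
    f a = b ↔ a = f b := by
  rw [← Perm.inv_eq_iff_eq, ← eq_inv_of_mul_eq_one_left hf]

lemma good_of_apply_le {k : ℕ} {y : Perm ℤ} (hy : y ∈ B k) (hyy : y * y = 1)
    (hval : ∀ j : ℤ, 1 ≤ j → j ≤ k → y j = j ∨ y j < 0 ∨ y j = k + 1) : Good k y := by
  refine ⟨hy, hyy, fun j h1 h2 => ?_⟩
  have hfix : y (k + 1) = k + 1 := hy.2 _ (by rw [abs_of_pos (by positivity)]; omega)
  rcases hval j h1 h2 with h | h | h
  · exact Or.inl h
  · exact Or.inr h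
  · exact absurd (y.injective (h.trans hfix.symm)) (by omega)

section conj

variable {k : ℕ} {w : Perm ℤ}

lemma conj_mem_B_succ (hw : w ∈ B (k + 1)) : (xE k)⁻¹ * w * xE k ∈ B (k + 1) :=
  mul_mem (mul_mem (inv_mem (xE_mem_B k)) hw) (xE_mem_B k)

lemma conj_apply_of_le (hw : Good (k + 1) w) {j : ℤ} (h1 : 1 ≤ j) (hj : j ≤ k) :
    ((xE k)⁻¹ * w * xE k) j = j ∨ ((xE k)⁻¹ * w * xE k) j < 0 ∨
      ((xE k)⁻¹ * w * xE k) j = k + 1 := by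
  rw [Perm.mul_apply, Perm.mul_apply, xE_apply_of_le h1 hj]
  rcases hw.2.2 (j + 1) (by omega) (by push_cast; omega) with h | h
  · left
    rw [h, Perm.inv_eq_iff_eq, xE_apply_of_le h1 hj]
  have hbound : |w (j + 1)| ≤ k + 1 := by
    exact_mod_cast abs_apply_le_of_mem_B hw.1 (by rw [abs_le]; push_cast; omega)
  rw [abs_le] at hbound
  obtain h' | h' := eq_or_lt_of_le (show w (j + 1) ≤ -1 by omega)
  · right; right
    rw [h', Perm.inv_eq_iff_eq, xE_apply_succ]
  · right; left
    rw [inv_xE_apply_of_neg (by omega) (by omega)]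
    omega

lemma conj_mem_B_iff (hw : w ∈ B (k + 1)) : (xE k)⁻¹ * w * xE k ∈ B k ↔ w 1 = 1 := by
  rw [mem_B_iff_apply_succ (conj_mem_B_succ hw), Perm.mul_apply, Perm.mul_apply, xE_apply_succ,
    Perm.inv_eq_iff_eq, xE_apply_succ, hw.1, neg_inj]

lemma conj_mul_t_mem_B_iff (hw : w ∈ B (k + 1)) :
    (xE k)⁻¹ * (w * t) * xE k ∈ B k ↔ w 1 = -1 := by
  rw [mem_B_iff_apply_succ (conj_mem_B_succ (mul_mem hw (t_mem_B (by omega)))),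
    Perm.mul_apply, Perm.mul_apply, Perm.mul_apply, xE_apply_succ, Perm.inv_eq_iff_eq,
    xE_apply_succ, show t (-1) = 1 from swap_apply_left _ _]

lemma conj_xI_mem_B_iff (hw : Good (k + 1) w) {i : ℕ} (h1 : 1 ≤ i) (hik : i ≤ k) :
    (xE k)⁻¹ * w * xI k i ∈ B k ↔ w 1 = -((i : ℤ) + 1) := by
  have hxI : xI k i ∈ B (k + 1) := xI_eq h1 hik ▸
    mul_mem (xE_mem_B k) (signedSwap_mem_B (by omega) (by omega) (by omega) (by push_cast; rfl))
  rw [mem_B_iff_apply_succ (mul_mem (mul_mem (inv_mem (xE_mem_B k)) hw.1) hxI), xI_eq h1 hik,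
    Perm.mul_apply, Perm.mul_apply, Perm.mul_apply, signedSwap_apply_right (by omega) (by omega),
    xE_apply_of_le (by omega) (by omega), Perm.inv_eq_iff_eq, xE_apply_succ,
    apply_eq_iff_of_mul_self_eq_one hw.2.1, hw.1.1, eq_comm, neg_eq_iff_eq_neg]

lemma conj_good (hw : Good (k + 1) w) (h1 : w 1 = 1) : Good k ((xE k)⁻¹ * w * xE k) :=
  good_of_apply_le ((conj_mem_B_iff hw.1).2 h1) (mul_self_inv_mul_mul_eq_one hw.2.1 _)
    (fun _ => conj_apply_of_le hw)

lemma conj_mul_t_good (hw : Good (k + 1) w) (h1 : w 1 = -1) :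
    Good k ((xE k)⁻¹ * (w * t) * xE k) := by
  have hcomm : Commute w t := mul_inv_eq_iff_eq_mul.mp <| by
    rw [t, ← swap_apply_apply, hw.1.1, h1, neg_neg, swap_comm]
  have hwt : w * t * (w * t) = 1 := mul_mul_self_eq_one_of_commute hcomm hw.2.1 (swap_mul_self _ _)
  refine good_of_apply_le ((conj_mul_t_mem_B_iff hw.1).2 h1) (mul_self_inv_mul_mul_eq_one hwt _)
    fun j hj1 hjk => ?_
  have ht : t (j + 1) = j + 1 := swap_apply_of_ne_of_ne (by omega) (by omega)
  simpa only [Perm.mul_apply, xE_apply_of_le hj1 hjk, ht] using conj_apply_of_le hw hj1 hjk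

lemma conj_xI_good (hw : Good (k + 1) w) {i : ℕ} (h1 : 1 ≤ i) (hik : i ≤ k)
    (hwi : w 1 = -((i : ℤ) + 1)) : Good k ((xE k)⁻¹ * w * xI k i) := by
  set z := (xE k)⁻¹ * w * xE k with hz
  have hzz : z * z = 1 := mul_self_inv_mul_mul_eq_one hw.2.1 _
  have hzk : z (k + 1) = i := by
    rw [hz, Perm.mul_apply, Perm.mul_apply, xE_apply_succ, hw.1.1, hwi, neg_neg,
      Perm.inv_eq_iff_eq, xE_apply_of_le (by omega) (by omega)]
  have hzi : z i = k + 1 := by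
    rw [← hzk, ← Perm.mul_apply, hzz, Perm.one_apply]
  have hcomm : Commute z (signedSwap i (k + 1)) := mul_inv_eq_iff_eq_mul.mp <| by
    rw [mul_signedSwap_mul_inv (conj_mem_B_succ hw.1).1, hzi, hzk, signedSwap_comm]
  have hy : (xE k)⁻¹ * w * xI k i = z * signedSwap i (k + 1) := by
    rw [xI_eq h1 hik, hz]; group
  refine hy ▸ good_of_apply_le (hy ▸ (conj_xI_mem_B_iff hw h1 hik).2 hwi)
    (mul_mul_self_eq_one_of_commute hcomm hzz (signedSwap_mul_self (by omega) (by omega)))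
    fun j hj1 hjk => ?_
  rw [Perm.mul_apply]
  obtain rfl | hji := eq_or_ne j i
  · exact Or.inl (by rw [signedSwap_apply_left (by omega) (by omega), hzk])
  · rw [signedSwap_apply_of_ne hji (by omega) (by omega) (by omega)]
    exact conj_apply_of_le hw hj1 hjk

end conj

theorem pred_good_general (k : ℕ) (w : Equiv.Perm ℤ) (hw : Good (k + 1) w) :
    ((xE k)⁻¹ * w * xE k ∈ B k ↔ w 1 = 1) ∧
    ((xE k)⁻¹ * (w * t) * xE k ∈ B k ↔ w 1 = -1) ∧
    (∀ i : ℕ, 1 ≤ i → i ≤ k → ((xE k)⁻¹ * w * xI k i ∈ B k ↔ w 1 = -((i : ℤ) + 1))) ∧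
    (w 1 = 1 → Good k ((xE k)⁻¹ * w * xE k)) ∧
    (w 1 = -1 → Good k ((xE k)⁻¹ * (w * t) * xE k)) ∧
    (∀ i : ℕ, 1 ≤ i → i ≤ k → w 1 = -((i : ℤ) + 1) → Good k ((xE k)⁻¹ * w * xI k i)) :=
  ⟨conj_mem_B_iff hw.1, conj_mul_t_mem_B_iff hw.1, fun _ => conj_xI_mem_B_iff hw,
    conj_good hw, conj_mul_t_good hw, fun _ => conj_xI_good hw⟩

theorem pred_good (k : ℕ) (hk : 1 ≤ k) (w : Equiv.Perm ℤ) (hw : Good (k + 1) w) :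
    ((xE k)⁻¹ * w * xE k ∈ B k ↔ w 1 = 1) ∧
    ((xE k)⁻¹ * (w * t) * xE k ∈ B k ↔ w 1 = -1) ∧
    (∀ i : ℕ, 1 ≤ i → i ≤ k → ((xE k)⁻¹ * w * xI k i ∈ B k ↔ w 1 = -((i : ℤ) + 1))) ∧
    (w 1 = 1 → Good k ((xE k)⁻¹ * w * xE k)) ∧
    (w 1 = -1 → Good k ((xE k)⁻¹ * (w * t) * xE k)) ∧
    (∀ i : ℕ, 1 ≤ i → i ≤ k → w 1 = -((i : ℤ) + 1) → Good k ((xE k)⁻¹ * w * xI k i)) :=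
  pred_good_general k w hw

end PaperB
end

section
/- Let n ≥ 0, k ≥ 1, and let c = s_{n+1} s_{n+2} ⋯ s_{n+k} ∈ B_{n+k+1}. Then in the Hecke algebra H_{p,q}(B_{n+k+1}): T_{c^{−1}} T_c = q^k T_1 + (1−q) Σ_{i=1}^{k} q^{i−1} T_{s_{n+k} ⋯ s_{n+i} ⋯ s_{n+k}}, where s_{n+k} ⋯ s_{n+i} ⋯ s_{n+k} denotes the palindromic product s_{n+k} s_{n+k−1} ⋯ s_{n+i} ⋯ s_{n+k−1} s_{n+k}. -/
/-
Multiply `T_{c⁻¹}` on the right by `T_{s_{n+1}}, …, T_{s_{n+k}}` in turn. Before the `j`-th factor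
the product is `q^{j-1} T_{(s_{n+j} ⋯ s_{n+k})⁻¹}` plus a combination of `T_w` with
`w = (s_{n+i} ⋯ s_{n+k})⁻¹ s_{n+i+1} ⋯ s_{n+j-1}`, `i < j`. The new factor lengthens every such `w`,
while the leading word ends in `s_{n+j}`, so the quadratic relation splits off
`q^{j-1} (1 - q) T_{(s_{n+j} ⋯ s_{n+k})⁻¹}` as the next summand. After `k` steps the summands are
the palindromes.

The length comparisons come from the number of inversions of `i ↦ |w i|` on `{1, …, m}`: it grows
by at most one per generator, so a word along which it grows at every letter is reduced, and so
are all its prefixes.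
-/

namespace PaperB

open scoped Classical

open Equiv

section Generators

lemma s_apply {c : ℕ} (hc : 1 ≤ c) (z : ℤ) :
    s c z = if z = c then (c : ℤ) + 1 else if z = (c : ℤ) + 1 then (c : ℤ) else
      if z = -(c : ℤ) then -((c : ℤ) + 1) else if z = -((c : ℤ) + 1) then -(c : ℤ) else z := by
  simp only [s, Perm.mul_apply, swap_apply_def]
  split_ifs <;> omega

lemma t_apply (z : ℤ) : t z = if z = 1 then -1 else if z = -1 then 1 else z := by
  simp only [t, swap_apply_def]
  split_ifs <;> omega

lemma s_apply_of_pos {c : ℕ} (hc : 1 ≤ c) {z : ℤ} (hz : 1 ≤ z) :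
    s c z = if z = c then (c : ℤ) + 1 else if z = (c : ℤ) + 1 then (c : ℤ) else z := by
  rw [s_apply hc]
  split_ifs <;> omega

lemma s_apply_s_apply {c : ℕ} (hc : 1 ≤ c) (z : ℤ) : s c (s c z) = z := by
  simp only [s_apply hc]
  split_ifs <;> omega

lemma s_mul_self {c : ℕ} (hc : 1 ≤ c) : s c * s c = 1 :=
  Perm.ext (s_apply_s_apply hc)

lemma s_ne_t {c : ℕ} (hc : 1 ≤ c) : s c ≠ t := by
  intro h
  have hcc := congrArg (fun w : Perm ℤ => w c) h
  simp only [s_apply hc, t_apply] at hcc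
  split_ifs at hcc <;> omega

lemma s_mem_gens {c m : ℕ} (hc : 1 ≤ c) (hcm : c < m) : s c ∈ gens m :=
  Set.mem_insert_of_mem _ ⟨c, ⟨hc, hcm⟩, rfl⟩

lemma mem_B_of_mem_gens {m : ℕ} (hm : 1 ≤ m) {g : Perm ℤ} (hg : g ∈ gens m) : g ∈ B m := by
  rcases hg with rfl | ⟨c, ⟨hc, hcm⟩, rfl⟩
  · refine ⟨fun i => ?_, fun i hi => ?_⟩
    · simp only [t_apply]; split_ifs <;> omega
    · rw [lt_abs] at hi; simp only [t_apply]; split_ifs <;> omega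
  · refine ⟨fun i => ?_, fun i hi => ?_⟩
    · simp only [s_apply hc]; split_ifs <;> omega
    · rw [lt_abs] at hi; simp only [s_apply hc]; split_ifs <;> omega

lemma list_prod_mem_B {m : ℕ} (hm : 1 ≤ m) {L : List (Perm ℤ)} (hL : ∀ g ∈ L, g ∈ gens m) :
    L.prod ∈ B m :=
  Subgroup.list_prod_mem _ fun g hg => mem_B_of_mem_gens hm (hL g hg)

end Generators

section AbsInv

noncomputable def absInv (m : ℕ) (w : Perm ℤ) : ℕ :=
  ((Finset.Icc (1 : ℤ) m ×ˢ Finset.Icc (1 : ℤ) m).filter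
    fun pr => pr.1 < pr.2 ∧ |w pr.2| < |w pr.1|).card

lemma absInv_one (m : ℕ) : absInv m 1 = 0 := by
  rw [absInv, Finset.card_eq_zero, Finset.filter_eq_empty_iff]
  rintro ⟨a, b⟩ h ⟨hab, habs⟩
  simp only [Finset.mem_product, Finset.mem_Icc] at h
  rw [Perm.one_apply, Perm.one_apply, abs_of_pos (by omega), abs_of_pos (by omega)] at habs
  omega

lemma absInv_mul_t {w : Perm ℤ} (hw : w (-1) = -w 1) (m : ℕ) : absInv m (w * t) = absInv m w := by
  have habs : ∀ z : ℤ, 1 ≤ z → |(w * t) z| = |w z| := by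
    intro z hz
    rw [Perm.mul_apply, t_apply]
    split_ifs with h1 h2
    · rw [hw, abs_neg, h1]
    · omega
    · rfl
  unfold absInv
  congr 1
  apply Finset.filter_congr
  rintro ⟨a, b⟩ h
  simp only [Finset.mem_product, Finset.mem_Icc] at h
  rw [habs a h.1.1, habs b h.2.1]

lemma absInv_mul_s (w : Perm ℤ) {c m : ℕ} (hc : 1 ≤ c) (hcm : c < m) :
    absInv m (w * s c) + (if |w (c + 1)| < |w c| then 1 else 0) =
      absInv m w + (if |w c| < |w (c + 1)| then 1 else 0) := by
  set S := Finset.Icc (1 : ℤ) m ×ˢ Finset.Icc (1 : ℤ) m with hS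
  have hmemS : ∀ pr : ℤ × ℤ, pr ∈ S ↔ (1 ≤ pr.1 ∧ pr.1 ≤ m) ∧ 1 ≤ pr.2 ∧ pr.2 ≤ m := by
    simp [hS]
  have hpos : ∀ z : ℤ, 1 ≤ z → z ≤ m → 1 ≤ s c z ∧ s c z ≤ m := by
    intro z hz hzm
    rw [s_apply_of_pos hc hz]
    split_ifs <;> omega
  -- reindex by the involution `(a, b) ↦ (s c a, s c b)` of `S`
  have hreindex : absInv m (w * s c) =
      (S.filter fun pr => s c pr.1 < s c pr.2 ∧ |w pr.2| < |w pr.1|).card := by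
    rw [absInv]
    refine Finset.card_nbij' (fun pr => (s c pr.1, s c pr.2)) (fun pr => (s c pr.1, s c pr.2))
      ?_ ?_ ?_ ?_ <;> intro pr h <;>
      simp only [Finset.mem_coe, Finset.mem_filter, ← hS, hmemS, Perm.mul_apply,
        s_apply_s_apply hc] at h ⊢
    all_goals exact ⟨⟨hpos _ h.1.1.1 h.1.1.2, hpos _ h.1.2.1 h.1.2.2⟩, h.2⟩
  have hpointwise : ∀ pr ∈ S,
      ((if s c pr.1 < s c pr.2 ∧ |w pr.2| < |w pr.1| then 1 else 0) +
        if pr = ((c : ℤ), (c : ℤ) + 1) then (if |w pr.2| < |w pr.1| then 1 else 0) else 0) =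
      (if pr.1 < pr.2 ∧ |w pr.2| < |w pr.1| then 1 else 0) +
        if pr = ((c : ℤ) + 1, (c : ℤ)) then (if |w pr.2| < |w pr.1| then 1 else 0) else 0 := by
    rintro ⟨a, b⟩ h
    rw [hmemS] at h
    simp only [s_apply_of_pos hc h.1.1, s_apply_of_pos hc h.2.1, Prod.mk.injEq]
    split_ifs <;> omega
  have hsum := Finset.sum_congr rfl hpointwise
  rw [Finset.sum_add_distrib, Finset.sum_add_distrib, Finset.sum_ite_eq', Finset.sum_ite_eq',
    if_pos ((hmemS _).2 (by omega)), if_pos ((hmemS _).2 (by omega)),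
    ← Finset.card_filter, ← Finset.card_filter] at hsum
  rw [hreindex, absInv]
  exact hsum

end AbsInv

section TightWord

variable {m : ℕ}

lemma absInv_mul_le {w g : Perm ℤ} (hw : w (-1) = -w 1) (hg : g ∈ gens m) :
    absInv m (w * g) ≤ absInv m w + 1 := by
  rcases hg with rfl | ⟨c, ⟨hc, hcm⟩, rfl⟩
  · rw [absInv_mul_t hw]
    omega
  · have h := absInv_mul_s w hc hcm
    split_ifs at h <;> omega

lemma absInv_le_length (hm : 1 ≤ m) {L : List (Perm ℤ)} (hL : ∀ g ∈ L, g ∈ gens m) :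
    absInv m L.prod ≤ L.length := by
  induction L using List.reverseRecOn with
  | nil => simp [absInv_one]
  | append_singleton L g ih =>
    simp only [List.mem_append, List.mem_singleton] at hL
    have hLB := list_prod_mem_B hm fun x hx => hL x (Or.inl hx)
    have := absInv_mul_le (hLB.1 1) (hL g (Or.inr rfl))
    have := ih fun x hx => hL x (Or.inl hx)
    rw [List.prod_append, List.prod_singleton, List.length_append, List.length_singleton]
    omega

def IsTightWord (m : ℕ) (L : List (Perm ℤ)) : Prop :=
  (∀ g ∈ L, g ∈ gens m) ∧ absInv m L.prod = L.length

namespace IsTightWord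

variable {L : List (Perm ℤ)}

lemma nil : IsTightWord m [] :=
  ⟨by simp, by simp [absInv_one]⟩

lemma len_eq (hm : 1 ≤ m) (h : IsTightWord m L) : len m L.prod = L.length := by
  have hL : L.length ∈ {l | ∃ L' : List (Perm ℤ), (∀ g ∈ L', g ∈ gens m) ∧ L'.prod = L.prod ∧
      L'.length = l} := ⟨L, h.1, rfl, rfl⟩
  refine le_antisymm (Nat.sInf_le hL) (le_csInf ⟨_, hL⟩ ?_)
  rintro l ⟨L', hL', hprod, rfl⟩
  rw [← h.2, ← hprod]
  exact absInv_le_length hm hL'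

lemma of_append (hm : 1 ≤ m) {g : Perm ℤ} (h : IsTightWord m (L ++ [g])) : IsTightWord m L := by
  obtain ⟨hgens, habs⟩ := h
  simp only [List.mem_append, List.mem_singleton] at hgens
  have hL : ∀ x ∈ L, x ∈ gens m := fun x hx => hgens x (Or.inl hx)
  have := absInv_mul_le ((list_prod_mem_B hm hL).1 1) (hgens g (Or.inr rfl))
  have := absInv_le_length hm hL
  rw [List.prod_append, List.prod_singleton, List.length_append, List.length_singleton] at habs
  exact ⟨hL, by omega⟩

lemma append_s (h : IsTightWord m L) {c : ℕ} (hc : 1 ≤ c) (hcm : c < m)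
    (hpos : 0 < L.prod c) (hlt : L.prod c < L.prod (c + 1)) : IsTightWord m (L ++ [s c]) := by
  replace hlt : |L.prod c| < |L.prod (c + 1)| := by
    rwa [abs_of_pos hpos, abs_of_pos (hpos.trans hlt)]
  refine ⟨fun g hg => ?_, ?_⟩
  · rcases List.mem_append.1 hg with hg | hg
    · exact h.1 g hg
    · exact List.mem_singleton.1 hg ▸ s_mem_gens hc hcm
  · have := absInv_mul_s L.prod hc hcm
    rw [if_pos hlt, if_neg (not_lt.2 hlt.le), h.2] at this
    rw [List.prod_append, List.prod_singleton, List.length_append, List.length_singleton]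
    omega

end IsTightWord

end TightWord

section AscendingWords

def ascList (x r : ℕ) : List (Perm ℤ) := (List.range r).map fun i => s (x + i)

def descAscList (x r l : ℕ) : List (Perm ℤ) := (ascList x r).reverse ++ ascList (x + 1) l

lemma ascList_zero (x : ℕ) : ascList x 0 = [] := rfl

lemma ascList_succ (x r : ℕ) : ascList x (r + 1) = ascList x r ++ [s (x + r)] := by
  simp [ascList, List.range_succ]

lemma ascList_succ' (x r : ℕ) : ascList x (r + 1) = s x :: ascList (x + 1) r := by
  simp [ascList, List.range_succ_eq_map, add_assoc, add_comm 1]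

lemma reverse_ascList (x r : ℕ) :
    (ascList x r).reverse = (List.range r).map fun j => s (x + r - 1 - j) := by
  conv_lhs => rw [ascList, ← List.map_reverse, List.range_eq_range', List.reverse_range',
    List.map_map]
  refine List.map_congr_left fun j hj => ?_
  rw [List.mem_range] at hj
  simp only [Function.comp_apply, zero_add]
  congr 1
  omega

lemma descAscList_zero (x r : ℕ) : descAscList x r 0 = (ascList x r).reverse :=
  List.append_nil _

lemma descAscList_succ (x r l : ℕ) :
    descAscList x r (l + 1) = descAscList x r l ++ [s (x + 1 + l)] := by
  rw [descAscList, descAscList, ascList_succ, List.append_assoc]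

lemma ascList_prod_apply {x : ℕ} (hx : 1 ≤ x) (r : ℕ) {z : ℤ} (hz : 1 ≤ z) :
    (ascList x r).prod z =
      if (x : ℤ) ≤ z ∧ z < x + r then z + 1 else if z = x + r then (x : ℤ) else z := by
  induction r generalizing z with
  | zero => simp only [ascList_zero, List.prod_nil, Perm.one_apply]; split_ifs <;> omega
  | succ r ih =>
    rw [ascList_succ, List.prod_append, List.prod_singleton, Perm.mul_apply,
      s_apply_of_pos (by omega) hz]
    push_cast
    split_ifs <;> rw [ih (by omega)] <;> split_ifs <;> omega

lemma ascList_prod_apply_of_le_of_lt {x r : ℕ} (hx : 1 ≤ x) {z : ℤ} (h₁ : x ≤ z) (h₂ : z < x + r) :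
    (ascList x r).prod z = z + 1 := by
  rw [ascList_prod_apply hx r (by omega), if_pos ⟨h₁, h₂⟩]

lemma ascList_prod_apply_add {x : ℕ} (hx : 1 ≤ x) (r : ℕ) :
    (ascList x r).prod (x + r) = x := by
  rw [ascList_prod_apply hx r (by omega)]
  simp

lemma ascList_prod_apply_of_lt_or_lt {x r : ℕ} (hx : 1 ≤ x) {z : ℤ} (hz : 1 ≤ z)
    (h : z < x ∨ x + r < z) : (ascList x r).prod z = z := by
  rw [ascList_prod_apply hx r hz, if_neg (by omega), if_neg (by omega)]

lemma reverse_ascList_prod {x : ℕ} (hx : 1 ≤ x) (r : ℕ) :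
    (ascList x r).reverse.prod = (ascList x r).prod⁻¹ := by
  have hinv : (ascList x r).map (fun g => g⁻¹) = ascList x r := by
    simp only [ascList, List.map_map]
    exact List.map_congr_left fun i _ => inv_eq_of_mul_eq_one_right (s_mul_self (by omega))
  rw [List.prod_inv_reverse, hinv]

variable {m : ℕ}

lemma isTightWord_ascList {x : ℕ} (hx : 1 ≤ x) : ∀ r, x + r ≤ m → IsTightWord m (ascList x r)
  | 0, _ => .nil
  | r + 1, hr => by
    rw [ascList_succ]
    have h₁ := ascList_prod_apply_add hx r
    have h₂ : (ascList x r).prod (x + r + 1) = x + r + 1 :=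
      ascList_prod_apply_of_lt_or_lt hx (by omega) (by omega)
    exact (isTightWord_ascList hx r (by omega)).append_s (by omega) (by omega)
      (by push_cast; omega) (by push_cast; omega)

lemma isTightWord_reverse_ascList :
    ∀ {x : ℕ} (r : ℕ), 1 ≤ x → x + r ≤ m → IsTightWord m (ascList x r).reverse
  | _, 0, _, _ => .nil
  | x, r + 1, hx, hr => by
    rw [ascList_succ', List.reverse_cons]
    have h₁ : (ascList (x + 1) r).reverse.prod x = x := by
      rw [reverse_ascList_prod (by omega), Perm.inv_eq_iff_eq,
        ascList_prod_apply_of_lt_or_lt (by omega) (by omega) (by omega)]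
    have h₂ : (ascList (x + 1) r).reverse.prod (x + 1) = x + 1 + r := by
      rw [reverse_ascList_prod (by omega), Perm.inv_eq_iff_eq]
      exact_mod_cast (ascList_prod_apply_add (by omega) r).symm
    exact (isTightWord_reverse_ascList r (by omega) (by omega)).append_s hx (by omega)
      (by omega) (by omega)

lemma isTightWord_descAscList {x r : ℕ} (hx : 1 ≤ x) (hr : x + r ≤ m) :
    ∀ l, l < r → IsTightWord m (descAscList x r l)
  | 0, _ => by
    rw [descAscList_zero]
    exact isTightWord_reverse_ascList r hx hr
  | l + 1, hl => by
    rw [descAscList_succ]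
    have h₁ : (descAscList x r l).prod (x + 1 + l) = x := by
      have e := ascList_prod_apply_add (x := x + 1) (by omega) l
      push_cast at e
      rw [descAscList, List.prod_append, Perm.mul_apply, reverse_ascList_prod hx,
        Perm.inv_eq_iff_eq, e, ascList_prod_apply_of_le_of_lt hx le_rfl (by omega)]
    have h₂ : (descAscList x r l).prod (x + 1 + l + 1) = x + 1 + l := by
      rw [descAscList, List.prod_append, Perm.mul_apply, reverse_ascList_prod hx,
        Perm.inv_eq_iff_eq, ascList_prod_apply_of_lt_or_lt (by omega) (by omega) (by omega),
        ascList_prod_apply_of_le_of_lt hx (by omega) (by omega)]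
    exact (isTightWord_descAscList hx hr l (by omega)).append_s (by omega) (by omega)
      (by push_cast; omega) (by push_cast; omega)

end AscendingWords

namespace HeckeModel

variable {m : ℕ} {p q : ℂ} {H : Type} [Ring H] [Algebra ℂ H] (M : HeckeModel m p q H) {x : ℕ}

lemma T_mul_of_isTightWord (hm : 1 ≤ m) {L : List (Perm ℤ)} {g : Perm ℤ}
    (h : IsTightWord m (L ++ [g])) :
    M.T L.prod * M.T g = M.T (L.prod * g) := by
  have hL := h.of_append hm
  have hlen := h.len_eq hm
  rw [List.prod_append, List.prod_singleton, List.length_append, List.length_singleton] at hlen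
  rw [M.T_mul _ (list_prod_mem_B hm hL.1) g (h.1 g (by simp)),
    if_pos (by rw [hL.len_eq hm, hlen]; omega)]

lemma T_mul_s_of_isTightWord (hm : 1 ≤ m) {L : List (Perm ℤ)} {c : ℕ} (hc : 1 ≤ c)
    (h : IsTightWord m (L ++ [s c])) :
    M.T (L.prod * s c) * M.T (s c) = q • M.T L.prod + (1 - q) • M.T (L.prod * s c) := by
  have hlen := h.len_eq hm
  rw [List.prod_append, List.prod_singleton, List.length_append, List.length_singleton] at hlen
  have hB : L.prod * s c ∈ B m := by
    simpa using list_prod_mem_B hm h.1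
  rw [M.T_mul _ hB _ (h.1 _ (by simp)), mul_assoc, s_mul_self hc, mul_one,
    if_neg (by rw [(h.of_append hm).len_eq hm, hlen]; omega), if_neg (s_ne_t hc)]

lemma T_ascList_succ (hx : 1 ≤ x) {r : ℕ} (hr : x + r < m) :
    M.T (ascList x (r + 1)).prod = M.T (ascList x r).prod * M.T (s (x + r)) := by
  have h := isTightWord_ascList hx (r + 1) hr
  rw [ascList_succ] at h ⊢
  rw [List.prod_append, List.prod_singleton, M.T_mul_of_isTightWord (by omega) h]

lemma T_reverse_ascList_succ_mul_T_s (hx : 1 ≤ x) {r : ℕ} (hr : x + r < m) :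
    M.T (ascList x (r + 1)).reverse.prod * M.T (s x) =
      q • M.T (ascList (x + 1) r).reverse.prod +
        (1 - q) • M.T (ascList x (r + 1)).reverse.prod := by
  have h := isTightWord_reverse_ascList (r + 1) hx hr
  rw [ascList_succ', List.reverse_cons] at h ⊢
  rw [List.prod_append, List.prod_singleton]
  exact M.T_mul_s_of_isTightWord (by omega) hx h

lemma T_descAscList_mul_T_s (hx : 1 ≤ x) {r l : ℕ} (hr : x + r ≤ m) (hl : l + 1 < r) :
    M.T (descAscList x r l).prod * M.T (s (x + 1 + l)) = M.T (descAscList x r (l + 1)).prod := by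
  have h := isTightWord_descAscList hx hr (l + 1) hl
  rw [descAscList_succ] at h ⊢
  rw [List.prod_append, List.prod_singleton, M.T_mul_of_isTightWord (by omega) h]

open Finset in
lemma T_reverse_ascList_mul_T_ascList (hx : 1 ≤ x) {k : ℕ} (hxk : x + k ≤ m) :
    ∀ j ≤ k, M.T (ascList x k).reverse.prod * M.T (ascList x j).prod =
      q ^ j • M.T (ascList (x + j) (k - j)).reverse.prod +
        (1 - q) • ∑ i ∈ range j, q ^ i • M.T (descAscList (x + i) (k - i) (j - i - 1)).prod
  | 0, _ => by simp [ascList_zero, M.T_one]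
  | j + 1, hj => by
    have hlead := M.T_reverse_ascList_succ_mul_T_s (x := x + j) (r := k - j - 1) (by omega)
      (by omega)
    rw [show k - j - 1 + 1 = k - j by omega, show x + j + 1 = x + (j + 1) by omega,
      Nat.sub_sub] at hlead
    have hsum : ∀ i ∈ range j,
        q ^ i • M.T (descAscList (x + i) (k - i) (j - i - 1)).prod * M.T (s (x + j)) =
          q ^ i • M.T (descAscList (x + i) (k - i) (j + 1 - i - 1)).prod := by
      intro i hi
      rw [mem_range] at hi
      have h := M.T_descAscList_mul_T_s (x := x + i) (r := k - i) (l := j - i - 1) (by omega)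
        (by omega) (by omega)
      rw [show x + i + 1 + (j - i - 1) = x + j by omega,
        show j - i - 1 + 1 = j + 1 - i - 1 by omega] at h
      rw [smul_mul_assoc, h]
    rw [M.T_ascList_succ hx (by omega), ← mul_assoc,
      T_reverse_ascList_mul_T_ascList hx hxk j (by omega), add_mul, smul_mul_assoc,
      smul_mul_assoc, sum_mul, sum_congr rfl hsum, sum_range_succ, hlead,
      show j + 1 - j - 1 = 0 by omega, descAscList_zero]
    module

end HeckeModel

lemma pal_succ_eq {n k i : ℕ} (hi : i < k) :
    pal n k (i + 1) = (descAscList (n + 1 + i) (k - i) (k - i - 1)).prod := by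
  rw [pal, descAscList, show k - i = k - (i + 1) + 1 by omega, ascList_succ', List.reverse_cons,
    reverse_ascList, show n + (i + 1) = n + 1 + i by omega]
  congr 3
  exact List.map_congr_left fun j _ => by congr 1; omega

theorem tcinv_tc_general (n k : ℕ) (p q : ℂ) (H : Type) [Ring H] [Algebra ℂ H]
    (M : HeckeModel (n + k + 1) p q H) :
    M.T (cElt n k)⁻¹ * M.T (cElt n k) =
      (q ^ k) • M.T 1 +
        (1 - q) • ∑ i ∈ Finset.Icc (1 : ℕ) k, (q ^ (i - 1)) • M.T (pal n k i) := by
  have h := M.T_reverse_ascList_mul_T_ascList (x := n + 1) le_add_self (by omega) k le_rfl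
  rw [reverse_ascList_prod le_add_self, Nat.sub_self, ascList_zero, List.reverse_nil,
    List.prod_nil] at h
  rw [show cElt n k = (ascList (n + 1) k).prod from rfl, h, ← Finset.Ico_add_one_right_eq_Icc,
    Finset.sum_Ico_eq_sum_range, Nat.add_sub_cancel]
  congr 2
  refine Finset.sum_congr rfl fun i hi => ?_
  rw [add_comm 1 i, Nat.add_sub_cancel, pal_succ_eq (Finset.mem_range.1 hi)]

theorem tcinv_tc (n k : ℕ) (hk : 1 ≤ k) (p q : ℂ) (H : Type) [Ring H] [Algebra ℂ H]
    (M : HeckeModel (n + k + 1) p q H) :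
    M.T (cElt n k)⁻¹ * M.T (cElt n k) =
      (q ^ k) • M.T 1 +
        (1 - q) • ∑ i ∈ Finset.Icc (1 : ℕ) k, (q ^ (i - 1)) • M.T (pal n k i) :=
  tcinv_tc_general n k p q H M

end PaperB
end
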